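/- Scale equivariance of the scalar-covariance simplified Kalman filter (sSKF) rating recursion. Let M ≥ 1, F ≥ 1, let Y be a type of game outcomes, let g, h : ℝ → Y → ℝ with h(z, y) ≥ 0 for all z, y, and let sequences x_t ∈ ℝ^M, β_t ∈ ℝ, y_t ∈ Y be given. For parameters s > 0, v₀ > 0, ε_t ≥ 0, define: μ₀(s, v₀, ε) = 0 ∈ ℝ^M, v_0(s, v₀, ε) = v₀ ∈ ℝ, and for t ≥ 1: v̄_t = β_t² v_{t-1} + ε_t, ω_t = 2F v̄_t, g_t = g(β_t x_tᵀ μ_{t-1} / s, y_t), h_t = h(β_t x_tᵀ μ_{t-1} / s, y_t), μ_t = β_t μ_{t-1} + v̄_t x_t · s g_t / (s² + h_t ω_t), v_t = v̄_t · ( 1 − (ω_t / M) · h_t / (s² + h_t ω_t) ). Then for every s > 0 and every t ≥ 0 one has μ_t(s, s² v₀, (s² ε_t)_t) = s · μ_t(1, v₀, (ε_t)_t) and v_t(s, s² v₀, (s² ε_t)_t) = s² · v_t(1, v₀, (ε_t)_t). -/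

import Mathlib

open Matrix

/-- The scalar-covariance simplified Kalman filter (sSKF) rating recursion:
`sSKF F g h x β y s v₀ ε t` returns the pair `(μ_t, v_t)` of the estimated mean
skills and the common scalar posterior variance after game `t`; `F` is the number
of players per team (so `2F` players take part in each game). -/
noncomputable def sSKF {M : ℕ} (F : ℕ) {Y : Type} (g h : ℝ → Y → ℝ)
    (x : ℕ → Fin M → ℝ) (β : ℕ → ℝ) (y : ℕ → Y)
    (s v₀ : ℝ) (ε : ℕ → ℝ) :
    ℕ → (Fin M → ℝ) × ℝ
  | 0 => (0, v₀)
  | (t + 1) =>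
    let μp := (sSKF F g h x β y s v₀ ε t).1
    let vp := (sSKF F g h x β y s v₀ ε t).2
    let vb := (β (t + 1)) ^ 2 * vp + ε (t + 1)
    let ω := 2 * (F : ℝ) * vb
    let gt := g (β (t + 1) * (x (t + 1) ⬝ᵥ μp) / s) (y (t + 1))
    let ht := h (β (t + 1) * (x (t + 1) ⬝ᵥ μp) / s) (y (t + 1))
    (fun m => β (t + 1) * μp m + vb * x (t + 1) m * (s * gt / (s ^ 2 + ht * ω)),
     vb * (1 - (ω / (M : ℝ)) * (ht / (s ^ 2 + ht * ω))))

/-- Scale equivariance of the sSKF rating recursion. -/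
theorem sSKF_scale_equivariant {M : ℕ} (hM : 1 ≤ M) (F : ℕ) (hF : 1 ≤ F)
    {Y : Type} (g h : ℝ → Y → ℝ)
    (hh : ∀ z y, 0 ≤ h z y)
    (x : ℕ → Fin M → ℝ) (β : ℕ → ℝ) (y : ℕ → Y)
    (s v₀ : ℝ) (hs : 0 < s) (hv₀ : 0 < v₀)
    (ε : ℕ → ℝ) (hε : ∀ t, 0 ≤ ε t) :
    ∀ t : ℕ,
      (sSKF F g h x β y s (s ^ 2 * v₀) (fun u => s ^ 2 * ε u) t).1
          = s • (sSKF F g h x β y 1 v₀ ε t).1 ∧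
        (sSKF F g h x β y s (s ^ 2 * v₀) (fun u => s ^ 2 * ε u) t).2
          = s ^ 2 * (sSKF F g h x β y 1 v₀ ε t).2 := by
  intro t
  have hs' : s ≠ 0 := ne_of_gt hs
  induction t with
  | zero => constructor <;> simp [sSKF]
  | succ t ih =>
    obtain ⟨ih1, ih2⟩ := ih
    simp only [sSKF, ih1, ih2]
    set μ := (sSKF F g h x β y 1 v₀ ε t).1 with hμ
    set v := (sSKF F g h x β y 1 v₀ ε t).2 with hv
    have harg : β (t+1) * (x (t+1) ⬝ᵥ (s • μ)) / s = β (t+1) * (x (t+1) ⬝ᵥ μ) / 1 := by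
      rw [dotProduct_smul]
      field_simp
      ring
    have hvb : β (t+1)^2 * (s^2*v) + s^2 * ε (t+1) = s^2 * (β (t+1)^2*v + ε (t+1)) := by ring
    rw [harg, hvb]
    set z := β (t+1) * (x (t+1) ⬝ᵥ μ) / 1 with hz
    set vb := β (t+1)^2*v + ε (t+1) with hvbdef
    set ht := h z (y (t+1)) with hht
    set gt := g z (y (t+1)) with hgt
    have hD : s^2 + ht * (2*(F:ℝ)*(s^2*vb)) = s^2 * (1 + ht * (2*F*vb)) := by ring
    have hD1 : (1:ℝ)^2 + ht*(2*F*vb) = 1 + ht*(2*F*vb) := by ring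
    constructor
    · funext m
      simp only [Pi.smul_apply, smul_eq_mul]
      rw [hD, hD1]
      rcases eq_or_ne (1 + ht*(2*(F:ℝ)*vb)) 0 with h0 | h0
      · rw [h0, mul_zero, div_zero, mul_zero, add_zero, div_zero, mul_zero, add_zero]
        ring
      · field_simp
    · rw [hD, hD1]
      rcases eq_or_ne (1 + ht*(2*(F:ℝ)*vb)) 0 with h0 | h0
      · rw [h0]
        simp
      · field_simp
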